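/- arXiv:2202.03196 — 2 statements merged into one kernel-verified Lean document; each statement's English description precedes it below -/
import Mathlib

section
/- Let ÷ be an AGM contraction operator on epistemic states (satisfying (C1)–(C7)) with Ψ ↦ ≤_Ψ a contraction-compatible faithful assignment. If α ∧ β is believed strictly less plausibly false than its negation in the sense that β <_Ψ ¬β and ¬α ∧ β <_Ψ ¬α ∧ ¬β (the lifted order on formulas), then the contractional (β ⇓ α) is accepted by Ψ, i.e. Ψ ÷ α ⊨ β. -/
inductive Form (V : Type) : Type
  | var : V → Form V
  | falsum : Form V
  | imp : Form V → Form V → Form V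

namespace Form

def eval {V : Type} (w : V → Bool) : Form V → Bool
  | var v => w v
  | falsum => false
  | imp a b => !(eval w a) || eval w b

def neg {V : Type} (a : Form V) : Form V := imp a falsum

def top {V : Type} : Form V := neg falsum

def conj {V : Type} (a b : Form V) : Form V := neg (imp a (neg b))

end Form

/-- Worlds (propositional interpretations) over the signature `V`. -/
abbrev World (V : Type) := V → Bool

/-- Models of a single formula. -/
def FMod {V : Type} (a : Form V) : Set (World V) := {w | a.eval w = true}

/-- Models of a set of formulas. -/
def SMod {V : Type} (X : Set (Form V)) : Set (World V) := {w | ∀ a ∈ X, a.eval w = true}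

/-- Deductive closure (consequence operator). -/
def Cn {V : Type} (X : Set (Form V)) : Set (Form V) := {b | ∀ w ∈ SMod X, b.eval w = true}

/-- Minimal elements of a set of worlds w.r.t. a relation. -/
def minSet {V : Type} (S : Set (World V)) (r : World V → World V → Prop) : Set (World V) :=
  {w ∈ S | ∀ w' ∈ S, r w w'}

/-- Total preorder: total (hence reflexive) and transitive. -/
def TotalPre {V : Type} (r : World V → World V → Prop) : Prop :=
  (∀ x y, r x y ∨ r y x) ∧ (∀ x y z, r x y → r y z → r x z)

/-- A belief change operator over epistemic states `E`: each state has a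
deductively closed belief set, and the operator maps a state and a formula to a state. -/
structure BCO (V E : Type) where
  Bel : E → Set (Form V)
  closed : ∀ Ψ, Cn (Bel Ψ) = Bel Ψ
  op : E → Form V → E

/-- Models of (the belief set of) an epistemic state. -/
def stMod {V E : Type} (O : BCO V E) (Ψ : E) : Set (World V) := SMod (O.Bel Ψ)

/-- Faithful assignment: each `le Ψ` is a total preorder; models of `Ψ` are mutually
equivalent and strictly below non-models. -/
def Faithful {V E : Type} (O : BCO V E) (le : E → World V → World V → Prop) : Prop :=
  (∀ Ψ, TotalPre (le Ψ)) ∧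
  (∀ Ψ w₁ w₂, w₁ ∈ stMod O Ψ → w₂ ∈ stMod O Ψ → le Ψ w₁ w₂) ∧
  (∀ Ψ w₁ w₂, w₁ ∈ stMod O Ψ → w₂ ∉ stMod O Ψ → (le Ψ w₁ w₂ ∧ ¬ le Ψ w₂ w₁))

/-- Contraction-compatibility: `[[Ψ ÷ α]] = [[Ψ]] ∪ min([[¬α]], ≤_Ψ)`. -/
def ContrCompat {V E : Type} (O : BCO V E) (le : E → World V → World V → Prop) : Prop :=
  ∀ Ψ (α : Form V), stMod O (O.op Ψ α) = stMod O Ψ ∪ minSet (FMod α.neg) (le Ψ)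

/-- Revision-compatibility: `[[Ψ * α]] = min([[α]], ≤_Ψ)`. -/
def RevCompat {V E : Type} (O : BCO V E) (le : E → World V → World V → Prop) : Prop :=
  ∀ Ψ (α : Form V), stMod O (O.op Ψ α) = minSet (FMod α) (le Ψ)

/-- The AGM contraction postulates (C1)–(C7) for epistemic states. -/
def AGMContr {V E : Type} (O : BCO V E) : Prop :=
  (∀ Ψ α, O.Bel (O.op Ψ α) ⊆ O.Bel Ψ) ∧
  (∀ Ψ α, α ∉ O.Bel Ψ → O.Bel Ψ ⊆ O.Bel (O.op Ψ α)) ∧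
  (∀ Ψ (α : Form V), ¬ (∀ w, w ∈ FMod α) → α ∉ O.Bel (O.op Ψ α)) ∧
  (∀ Ψ α, O.Bel Ψ ⊆ Cn (O.Bel (O.op Ψ α) ∪ {α})) ∧
  (∀ Ψ α β, FMod α = FMod β → O.Bel (O.op Ψ α) = O.Bel (O.op Ψ β)) ∧
  (∀ Ψ (α β : Form V), O.Bel (O.op Ψ α) ∩ O.Bel (O.op Ψ β) ⊆ O.Bel (O.op Ψ (α.conj β))) ∧
  (∀ Ψ (α β : Form V), β ∉ O.Bel (O.op Ψ (α.conj β)) → O.Bel (O.op Ψ (α.conj β)) ⊆ O.Bel (O.op Ψ β))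

/-- Unbiasedness: every consistent set of formulas has an epistemic state whose
belief set is its deductive closure. -/
def Unbiased {V E : Type} (O : BCO V E) : Prop :=
  ∀ L : Set (Form V), (SMod L).Nonempty → ∃ Ψ : E, O.Bel Ψ = Cn L

/-- Strict lifted order on formulas induced by a preorder on worlds:
`φ < ψ` iff every minimal model of `ψ` is strictly above some minimal model of `φ`. -/
def fLt {V : Type} (r : World V → World V → Prop) (φ ψ : Form V) : Prop :=
  ∀ ω ∈ minSet (FMod ψ) r, ∃ ω' ∈ minSet (FMod φ) r, r ω' ω ∧ ¬ r ω ω'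

/-!
A counter-model `w` of `β` in `[[Ψ ÷ α]] = [[Ψ]] ∪ min([[¬α]], ≤_Ψ)` would be a minimal model of
`¬β` (if `w ⊨ Ψ`, it lies below every world) or of `¬α ∧ ¬β` (if `w` is a minimal `¬α`-world).
Either hypothesis then produces a world strictly below `w` inside the same region, `⊤` resp. `¬α`,
contradicting the minimality of `w` there.
-/

namespace Form

variable {V : Type}

@[simp]
lemma eval_neg (a : Form V) (w : World V) : a.neg.eval w = !a.eval w := by
  simp [neg, eval]

@[simp]
lemma eval_conj (a b : Form V) (w : World V) : (a.conj b).eval w = (a.eval w && b.eval w) := by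
  simp [conj, neg, eval]

end Form

section

variable {V : Type}

lemma FMod_neg (a : Form V) : FMod a.neg = (FMod a)ᶜ := by
  ext w; simp [FMod]

lemma FMod_conj (a b : Form V) : FMod (a.conj b) = FMod a ∩ FMod b := by
  ext w; simp [FMod]

lemma FMod_conj_subset_left (a b : Form V) : FMod (a.conj b) ⊆ FMod a := by
  rw [FMod_conj]; exact Set.inter_subset_left

lemma minSet_mono {S T : Set (World V)} {r : World V → World V → Prop} {w : World V}
    (hw : w ∈ minSet S r) (hT : T ⊆ S) (hwT : w ∈ T) : w ∈ minSet T r :=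
  ⟨hwT, fun w' hw' => hw.2 w' (hT hw')⟩

lemma not_fLt_of_mem_minSet {S : Set (World V)} {r : World V → World V → Prop} {φ ψ : Form V}
    {w : World V} (hw : w ∈ minSet S r) (hφ : FMod φ ⊆ S) (hψ : FMod ψ ⊆ S)
    (hwψ : w ∈ FMod ψ) : ¬ fLt r φ ψ := by
  intro hlt
  obtain ⟨ω, hωmin, -, hnot⟩ := hlt w (minSet_mono hw hψ hwψ)
  exact hnot (hw.2 ω (hφ hωmin.1))

end

lemma mem_Bel_iff {V E : Type} (O : BCO V E) (Ψ : E) (β : Form V) :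
    β ∈ O.Bel Ψ ↔ ∀ w ∈ stMod O Ψ, w ∈ FMod β := by
  rw [← O.closed Ψ]; rfl

lemma Faithful.mem_minSet_univ {V E : Type} {O : BCO V E} {le : E → World V → World V → Prop}
    (hF : Faithful O le) {Ψ : E} {w : World V} (hw : w ∈ stMod O Ψ) :
    w ∈ minSet Set.univ (le Ψ) := by
  refine ⟨trivial, fun w' _ => ?_⟩
  by_cases hw' : w' ∈ stMod O Ψ
  · exact hF.2.1 Ψ w w' hw hw'
  · exact (hF.2.2 Ψ w w' hw hw').1

theorem stmt_5_general {V E : Type} (O : BCO V E)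
    (le : E → World V → World V → Prop)
    (hF : Faithful O le) (hC : ContrCompat O le) :
    ∀ (Ψ : E) (α β : Form V),
      fLt (le Ψ) β β.neg → fLt (le Ψ) (α.neg.conj β) (α.neg.conj β.neg) →
        β ∈ O.Bel (O.op Ψ α) := by
  intro Ψ α β hβ hαβ
  rw [mem_Bel_iff, hC]
  rintro w (hwΨ | hwmin) <;> by_contra hwβ
  · exact not_fLt_of_mem_minSet (hF.mem_minSet_univ hwΨ) (Set.subset_univ _)
      (Set.subset_univ _) (by rwa [FMod_neg]) hβ
  · exact not_fLt_of_mem_minSet hwmin (FMod_conj_subset_left _ _) (FMod_conj_subset_left _ _)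
      (by rw [FMod_conj, FMod_neg β]; exact ⟨hwmin.1, hwβ⟩) hαβ

/-- if `β <_Ψ ¬β` and `¬α ∧ β <_Ψ ¬α ∧ ¬β` then `Ψ ÷ α ⊨ β`. -/
theorem stmt_5 {V E : Type} [Fintype V] (O : BCO V E)
    (le : E → World V → World V → Prop)
    (hA : AGMContr O) (hF : Faithful O le) (hC : ContrCompat O le) :
    ∀ (Ψ : E) (α β : Form V),
      fLt (le Ψ) β β.neg → fLt (le Ψ) (α.neg.conj β) (α.neg.conj β.neg) →
        β ∈ O.Bel (O.op Ψ α) :=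
  stmt_5_general O le hF hC
end

section
/- There is no AGM contraction operator ÷ (satisfying postulates (C1)–(C7), equivalently representable by a contraction-compatible faithful assignment over an unbiased set of epistemic states with |Ω| ≥ 2) that satisfies the Darwiche–Pearl postulate (DP1): if β ⊨ α then Bel(Ψ ÷ α ÷ β) = Bel(Ψ ÷ β). -/
/-!
Contracting a consistent state by `⊥` changes nothing (C2), and contraction never adds
beliefs (C1), so `Ψ ÷ α` is again consistent and `Ψ ÷ α ÷ ⊥` has the beliefs of `Ψ ÷ α`.
Since `⊥ ⊨ α`, (DP1) then gives `Bel(Ψ ÷ α) = Bel(Ψ ÷ ⊥) = Bel(Ψ)` for every consistent `Ψ`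
and every `α`: contraction would be idle. With at least one variable `p`, unbiasedness provides a
consistent state believing the non-tautology `p`, and (C3) forbids it to keep `p` after `÷ p`.
-/

def SatisfiesDP1 {V E : Type} (O : BCO V E) : Prop :=
  ∀ (Ψ : E) (α β : Form V), FMod β ⊆ FMod α →
    O.Bel (O.op (O.op Ψ α) β) = O.Bel (O.op Ψ β)

section Consequence

variable {V : Type}

theorem subset_Cn (X : Set (Form V)) : X ⊆ Cn X :=
  fun _ ha _ hw => hw _ ha

theorem SMod_Cn (X : Set (Form V)) : SMod (Cn X) = SMod X :=
  Set.Subset.antisymm (fun _ hw a ha => hw a (subset_Cn X ha)) fun _ hw _ hb => hb _ hw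

theorem SMod_singleton (α : Form V) : SMod {α} = FMod α := by
  ext w
  simp [SMod, FMod]

theorem FMod_falsum : FMod (Form.falsum : Form V) = ∅ := by
  ext w
  simp [FMod, Form.eval]

end Consequence

namespace BCO

variable {V E : Type} (O : BCO V E)

theorem stMod_anti {Ψ Φ : E} (h : O.Bel Ψ ⊆ O.Bel Φ) : stMod O Φ ⊆ stMod O Ψ :=
  fun _ hw a ha => hw a (h ha)

theorem falsum_not_mem_Bel {Ψ : E} (hΨ : (stMod O Ψ).Nonempty) : Form.falsum ∉ O.Bel Ψ :=
  fun h => by simpa [Form.eval] using hΨ.some_mem _ h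

theorem exists_Bel_eq_Cn_singleton (hU : Unbiased O) {α : Form V} (hα : (FMod α).Nonempty) :
    ∃ Ψ : E, O.Bel Ψ = Cn {α} :=
  hU {α} (by rwa [SMod_singleton])

variable {O}

theorem Bel_op_falsum (hA : AGMContr O) {Ψ : E} (hΨ : (stMod O Ψ).Nonempty) :
    O.Bel (O.op Ψ Form.falsum) = O.Bel Ψ :=
  Set.Subset.antisymm (hA.1 Ψ _) (hA.2.1 Ψ _ (O.falsum_not_mem_Bel hΨ))

theorem stMod_op_nonempty (hA : AGMContr O) {Ψ : E} (hΨ : (stMod O Ψ).Nonempty) (α : Form V) :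
    (stMod O (O.op Ψ α)).Nonempty :=
  hΨ.mono (O.stMod_anti (hA.1 Ψ α))

theorem Bel_op_eq_of_satisfiesDP1 (hA : AGMContr O) (hDP : SatisfiesDP1 O) {Ψ : E}
    (hΨ : (stMod O Ψ).Nonempty) (α : Form V) : O.Bel (O.op Ψ α) = O.Bel Ψ := by
  have hfalsum : FMod Form.falsum ⊆ FMod α := by
    simp [FMod_falsum]
  calc O.Bel (O.op Ψ α)
      = O.Bel (O.op (O.op Ψ α) Form.falsum) := (Bel_op_falsum hA (stMod_op_nonempty hA hΨ α)).symm
    _ = O.Bel (O.op Ψ Form.falsum) := hDP Ψ α _ hfalsum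
    _ = O.Bel Ψ := Bel_op_falsum hA hΨ

end BCO

theorem nonempty_of_two_le_card_world {V : Type} [Fintype V] [DecidableEq V]
    (h2 : 2 ≤ Fintype.card (World V)) : Nonempty V := by
  rw [Fintype.card_fun, Fintype.card_bool] at h2
  refine Fintype.card_pos_iff.mp (Nat.pos_of_ne_zero fun h0 => ?_)
  simp [h0] at h2

/-- no AGM contraction operator over an unbiased set of epistemic
states (with at least two worlds) satisfies (DP1). -/
theorem stmt_6 {V E : Type} [Fintype V] [DecidableEq V]
    (h2 : 2 ≤ Fintype.card (World V)) (O : BCO V E)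
    (hA : AGMContr O) (hU : Unbiased O) :
    ¬ (∀ (Ψ : E) (α β : Form V), FMod β ⊆ FMod α →
        O.Bel (O.op (O.op Ψ α) β) = O.Bel (O.op Ψ β)) := by
  intro hDP
  obtain ⟨p⟩ := nonempty_of_two_le_card_world h2
  obtain ⟨Ψ, hΨ⟩ := O.exists_Bel_eq_Cn_singleton hU (α := Form.var p) ⟨fun _ => true, rfl⟩
  have hconsistent : (stMod O Ψ).Nonempty := by
    rw [stMod, hΨ, SMod_Cn, SMod_singleton]
    exact ⟨fun _ => true, rfl⟩
  have hp_not_taut : ¬ ∀ w, w ∈ FMod (Form.var p) := fun h => Bool.false_ne_true (h fun _ => false)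
  have hp_believed : Form.var p ∈ O.Bel Ψ := hΨ ▸ subset_Cn _ rfl
  apply hA.2.2.1 Ψ _ hp_not_taut
  rwa [BCO.Bel_op_eq_of_satisfiesDP1 hA hDP hconsistent]
end
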